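/- Let P be a reduced word poset for w ∈ W and let λ_P : R(w) → N+ be defined by λ_P(r) = dp(φ_P^{-1}(r)), where dp is the depth function of P. Then for every k ∈ N+, the elements of P_k = φ_P^{-1}(λ_P^{-1}({k})) are pairwise incomparable in P, their labels are pairwise distinct and pairwise commuting; in particular s(P_k) is an independent subset of S with |s(P_k)| = |P_k|. -/

import Mathlib

def WStep {S : Type*} (comm : S → S → Prop) (w : List S) (i j : Fin w.length) : Prop :=
  i ≤ j ∧ (w.get i = w.get j ∨ ¬ comm (w.get i) (w.get j))

/-- The word-poset order `≤_w` on positions of `w`. -/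
def WLe {S : Type*} (comm : S → S → Prop) (w : List S) : Fin w.length → Fin w.length → Prop :=
  Relation.TransGen (WStep comm w)

/-- The depth of `u`: the greatest length of a strictly increasing chain ending at `u`. -/
noncomputable def wDepth {ι : Type*} (r : ι → ι → Prop) (u : ι) : ℕ :=
  sSup {m | ∃ l : List ι, l.Chain' (fun x y => r x y ∧ x ≠ y) ∧
    l.getLast? = some u ∧ l.length = m}

/-! Depth is strictly monotone along the word-poset order, so positions of equal depth are
incomparable. Two incomparable positions `i < j` are in particular not related by a single
step of the order, which forces their letters to be distinct and commuting. -/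

section Depth

variable {ι : Type*} {r : ι → ι → Prop}

def chainLengthsTo (r : ι → ι → Prop) (u : ι) : Set ℕ :=
  {m | ∃ l : List ι, l.IsChain (fun x y => r x y ∧ x ≠ y) ∧ l.getLast? = some u ∧ l.length = m}

lemma one_mem_chainLengthsTo (u : ι) : 1 ∈ chainLengthsTo r u :=
  ⟨[u], List.isChain_singleton u, rfl, rfl⟩

lemma succ_mem_chainLengthsTo {u v : ι} {m : ℕ} (hm : m ∈ chainLengthsTo r u) (huv : r u v)
    (hne : u ≠ v) : m + 1 ∈ chainLengthsTo r v := by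
  obtain ⟨l, hc, hlast, rfl⟩ := hm
  refine ⟨l ++ [v], ?_, by simp, by simp⟩
  rw [List.isChain_append]
  refine ⟨hc, List.isChain_singleton v, fun x hx y hy => ?_⟩
  rw [hlast, Option.mem_some_iff] at hx
  rw [List.head?_cons, Option.mem_some_iff] at hy
  subst hx hy
  exact ⟨huv, hne⟩

lemma chainLengthsTo_bddAbove [Fintype ι] [PartialOrder ι] (hr : ∀ x y, r x y → x ≤ y)
    (u : ι) : BddAbove (chainLengthsTo r u) := by
  refine ⟨Fintype.card ι, ?_⟩
  rintro _ ⟨l, hc, -, rfl⟩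
  have hlt : l.IsChain (· < ·) := hc.imp fun x y h => (hr x y h.1).lt_of_ne h.2
  exact (List.isChain_iff_pairwise.mp hlt).nodup.length_le_card

lemma wDepth_lt_wDepth (hbdd : ∀ u, BddAbove (chainLengthsTo r u)) {u v : ι} (huv : r u v)
    (hne : u ≠ v) : wDepth r u < wDepth r v := by
  have hmem : wDepth r u ∈ chainLengthsTo r u :=
    Nat.sSup_mem ⟨1, one_mem_chainLengthsTo u⟩ (hbdd u)
  exact (Nat.lt_succ_self _).trans_le (le_csSup (hbdd v) (succ_mem_chainLengthsTo hmem huv hne))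

end Depth

section WordPoset

variable {S : Type*} {comm : S → S → Prop} {w : List S} {i j : Fin w.length}

lemma WLe.le (h : WLe comm w i j) : i ≤ j := by
  induction h with
  | single h => exact h.1
  | tail _ h ih => exact ih.trans h.1

lemma WLe.get_ne_and_comm_of_not (hij : i ≤ j) (h : ¬ WLe comm w i j) :
    w.get i ≠ w.get j ∧ comm (w.get i) (w.get j) := by
  have hstep : ¬ WStep comm w i j := fun hs => h (Relation.TransGen.single hs)
  simpa only [WStep, hij, true_and, not_or, not_not] using hstep

end WordPoset

theorem same_depth_incomparable_independent_general {B : Type*}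
    {M : CoxeterMatrix B}
    (ω : List B) (i j : Fin ω.length) (hij : i ≠ j)
    (hdp : wDepth (WLe (fun a b => M a b = 2) ω) i
         = wDepth (WLe (fun a b => M a b = 2) ω) j) :
    (¬ WLe (fun a b => M a b = 2) ω i j ∧ ¬ WLe (fun a b => M a b = 2) ω j i) ∧
    ω.get i ≠ ω.get j ∧ M (ω.get i) (ω.get j) = 2 := by
  have hbdd := chainLengthsTo_bddAbove (r := WLe (fun a b => M a b = 2) ω) fun _ _ h => h.le
  have hnij : ¬ WLe (fun a b => M a b = 2) ω i j := fun h =>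
    (wDepth_lt_wDepth hbdd h hij).ne hdp
  have hnji : ¬ WLe (fun a b => M a b = 2) ω j i := fun h =>
    (wDepth_lt_wDepth hbdd h hij.symm).ne hdp.symm
  refine ⟨⟨hnij, hnji⟩, ?_⟩
  rcases hij.lt_or_gt with hlt | hlt
  · exact WLe.get_ne_and_comm_of_not hlt.le hnij
  · obtain ⟨hne, hcomm⟩ := WLe.get_ne_and_comm_of_not hlt.le hnji
    exact ⟨hne.symm, (M.symmetric _ _).trans hcomm⟩

/-- In a reduced word poset, positions with the same depth (i.e., the sets
`φ_P⁻¹(λ_P⁻¹({k}))`) are pairwise incomparable, with distinct, commuting labels;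
in particular they give an independent subset of `S` of the same cardinality. -/
theorem same_depth_incomparable_independent {B W : Type*} [Group W]
    {M : CoxeterMatrix B} (cs : CoxeterSystem M W)
    (ω : List B) (hred : cs.IsReduced ω) (i j : Fin ω.length) (hij : i ≠ j)
    (hdp : wDepth (WLe (fun a b => M a b = 2) ω) i
         = wDepth (WLe (fun a b => M a b = 2) ω) j) :
    (¬ WLe (fun a b => M a b = 2) ω i j ∧ ¬ WLe (fun a b => M a b = 2) ω j i) ∧
    ω.get i ≠ ω.get j ∧ M (ω.get i) (ω.get j) = 2 :=
  same_depth_incomparable_independent_general ω i j hij hdp
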